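/- arXiv:1603.01829 — 2 statements merged into one kernel-verified Lean document; each statement's English description precedes it below -/
import Mathlib

section
/- Let (Z,d) be a uniformly locally finite metric space, let R > 0, let k : Z × Z → ℂ be a Schur multiplier, and let a be a bounded operator on ℓ²(Z) with propagation at most R. Then ‖m_k(a) − a‖ ≤ N_R · ‖a‖ · sup{|k(x,y) − 1| : x,y ∈ Z, d(x,y) ≤ R}, where N_R = sup_{z∈Z} |B(z,R)|. -/
open MeasureTheory Metric Bornology Filter Topology
open scoped ENNReal BoundedContinuousFunction

noncomputable section

/-- `ℓ²(X)` over `ℂ`. -/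
abbrev l2 (X : Type*) : Type _ := lp (fun _ : X => ℂ) 2

/-- The standard basis vector `δ_x` of `ℓ²(X)`. -/
def delta {X : Type*} (x : X) : l2 X := by classical exact lp.single 2 x 1

/-- The matrix entry `a_{x,y} = ⟨a δ_y, δ_x⟩` of a bounded operator on `ℓ²(X)`. -/
def entry {X : Type*} (a : l2 X →L[ℂ] l2 X) (x y : X) : ℂ := inner ℂ (delta x) (a (delta y))

/-- A metric space is uniformly locally finite if there is a uniform bound on the
cardinality of all closed balls of each fixed radius. -/
def UniformlyLocallyFinite (Z : Type*) [MetricSpace Z] : Prop :=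
  ∀ S > (0 : ℝ), ∃ N : ℕ, ∀ z : Z,
    (Metric.closedBall z S).Finite ∧ (Metric.closedBall z S).ncard ≤ N

/-- A bounded operator on `ℓ²(Z)` has propagation at most `R`. -/
def HasPropagationLE {Z : Type*} [MetricSpace Z] (a : l2 Z →L[ℂ] l2 Z) (R : ℝ) : Prop :=
  ∀ x y : Z, R < dist x y → entry a x y = 0

/-- The uniform Roe algebra of `Z`: the operator-norm closure of the set of bounded
operators of finite propagation. -/
def uniformRoeAlgebra (Z : Type*) [MetricSpace Z] : Set (l2 Z →L[ℂ] l2 Z) :=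
  closure {a | ∃ R : ℝ, HasPropagationLE a R}

/-- A ghost operator: the matrix entries vanish at infinity. -/
def IsGhost {Z : Type*} [MetricSpace Z] (a : l2 Z →L[ℂ] l2 Z) : Prop :=
  ∀ ε > (0 : ℝ), ∃ F : Set Z, Bornology.IsBounded F ∧
    ∀ x y : Z, (x, y) ∉ F ×ˢ F → ‖entry a x y‖ < ε

/-! The entries of `m_k(a) - a` are `(k x y - 1) a_{x,y}`: they vanish off the `R`-neighbourhood
of the diagonal and are bounded by `‖a‖ s`, where `s` is the supremum in the statement; `s` is
finite because `|k x y| ≤ ‖m_k‖`, as one sees by applying `m_k` to a matrix unit.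

An operator `b` whose entries vanish off that neighbourhood and are bounded by `c` has norm at most
`N c` (a Schur test): by Cauchy–Schwarz along each row, `|(b v)_x|² ≤ N c² ∑_{d(x,y) ≤ R} |v_y|²`,
and summing over `x` counts each `|v_y|²` at most `N` times, because balls are symmetric. -/

section l2

variable {X : Type*}

theorem delta_eq_single [DecidableEq X] (x : X) : delta x = lp.single 2 x (1 : ℂ) := by
  unfold delta
  congr!

theorem norm_delta (x : X) : ‖delta x‖ = 1 := by
  classical
  simp [delta_eq_single, lp.norm_single (p := 2) (E := fun _ : X => ℂ)]

theorem inner_delta_left (x : X) (f : l2 X) : inner ℂ (delta x) f = f x := by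
  classical
  simp [delta_eq_single, lp.inner_single_left]

theorem norm_entry_le (a : l2 X →L[ℂ] l2 X) (x y : X) : ‖entry a x y‖ ≤ ‖a‖ :=
  calc ‖entry a x y‖ ≤ ‖delta x‖ * ‖a (delta y)‖ := norm_inner_le_norm _ _
    _ ≤ ‖a‖ := by simpa [norm_delta] using a.le_opNorm (delta y)

theorem entry_sub (a b : l2 X →L[ℂ] l2 X) (x y : X) :
    entry (a - b) x y = entry a x y - entry b x y :=
  inner_sub_right ..

theorem exists_norm_le_one_entry_eq_one (x y : X) :
    ∃ e : l2 X →L[ℂ] l2 X, ‖e‖ ≤ 1 ∧ entry e x y = 1 := by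
  refine ⟨(innerSL ℂ (delta y)).smulRight (delta x), ?_, ?_⟩
  · simp [ContinuousLinearMap.norm_smulRight_apply, norm_delta]
  · simp [entry, norm_delta]

theorem hasSum_entry_mul (b : l2 X →L[ℂ] l2 X) (v : l2 X) (x : X) :
    HasSum (fun y => entry b x y * v y) (b v x) := by
  classical
  have hv : HasSum (fun y => v y • delta y) v := by
    simpa [delta_eq_single, ← lp.single_smul] using lp.hasSum_single (by norm_num) v
  simpa [entry, inner_delta_left, mul_comm] using (hv.mapL b).mapL (innerSL ℂ (delta x))

theorem enorm_sq_eq_tsum (f : l2 X) : ‖f‖ₑ ^ 2 = ∑' x, ‖f x‖ₑ ^ 2 := by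
  have h := lp.norm_rpow_eq_tsum (p := 2) (by norm_num) f
  have hs := (lp.memℓp f).summable (p := 2) (by norm_num)
  simp only [ENNReal.toReal_ofNat, Real.rpow_two] at h hs
  simp_rw [← ofReal_norm, ← ENNReal.ofReal_pow (norm_nonneg _), h]
  exact ENNReal.ofReal_tsum_of_nonneg (fun _ => sq_nonneg _) hs

end l2

theorem norm_le_opNorm_of_entry_eq_mul {X : Type*} (k : X → X → ℂ)
    (M : (l2 X →L[ℂ] l2 X) →L[ℂ] l2 X →L[ℂ] l2 X)
    (hM : ∀ (a : l2 X →L[ℂ] l2 X) (x y : X), entry (M a) x y = k x y * entry a x y)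
    (x y : X) : ‖k x y‖ ≤ ‖M‖ := by
  obtain ⟨e, he, hxy⟩ := exists_norm_le_one_entry_eq_one x y
  calc ‖k x y‖ = ‖entry (M e) x y‖ := by rw [hM, hxy, mul_one]
    _ ≤ ‖M e‖ := norm_entry_le _ x y
    _ ≤ ‖M‖ := M.le_of_opNorm_le_of_le le_rfl he |>.trans_eq (mul_one _)

theorem tsum_sum_le_mul_tsum_of_symm {X : Type*} (F : X → Finset X)
    (hF : ∀ x y, y ∈ F x → x ∈ F y) {N : ℕ} (hN : ∀ x, (F x).card ≤ N) (g : X → ℝ≥0∞) :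
    ∑' x, ∑ y ∈ F x, g y ≤ N * ∑' y, g y := by
  calc ∑' x, ∑ y ∈ F x, g y = ∑' x, ∑' y, (F x : Set X).indicator g y :=
        tsum_congr fun x => sum_eq_tsum_indicator g (F x)
    _ = ∑' y, ∑' x, (F x : Set X).indicator g y := ENNReal.tsum_comm
    _ ≤ ∑' y, ∑' x, (F y : Set X).indicator (fun _ => g y) x := by
        gcongr with y x
        by_cases h : y ∈ F x <;> simp [Set.indicator, h, hF x y]
    _ = ∑' y, (F y).card * g y := by
        simp_rw [← sum_eq_tsum_indicator, Finset.sum_const, nsmul_eq_mul]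
    _ ≤ ∑' y, N * g y := by gcongr with y; exact_mod_cast hN y
    _ = N * ∑' y, g y := ENNReal.tsum_mul_left

section propagation

variable {Z : Type*} [MetricSpace Z] {R : ℝ} (hfin : ∀ z : Z, (closedBall z R).Finite)
include hfin

theorem apply_eq_sum_closedBall {b : l2 Z →L[ℂ] l2 Z} (hb : HasPropagationLE b R)
    (v : l2 Z) (x : Z) : b v x = ∑ y ∈ (hfin x).toFinset, entry b x y * v y := by
  refine (hasSum_entry_mul b v x).unique (hasSum_sum_of_ne_finset_zero fun y hy => ?_)
  rw [Set.Finite.mem_toFinset, mem_closedBall, not_le, dist_comm] at hy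
  rw [hb x y hy, zero_mul]

theorem norm_apply_sq_le_sum_closedBall {b : l2 Z →L[ℂ] l2 Z} (hb : HasPropagationLE b R) {c : ℝ}
    (hc : ∀ x y, ‖entry b x y‖ ≤ c) {N : ℕ} (hN : ∀ z : Z, (closedBall z R).ncard ≤ N)
    (v : l2 Z) (x : Z) :
    ‖b v x‖ ^ 2 ≤ N * c ^ 2 * ∑ y ∈ (hfin x).toFinset, ‖v y‖ ^ 2 := by
  set F := (hfin x).toFinset
  have hF : (F.card : ℝ) ≤ N := by
    rw [← Set.ncard_eq_toFinset_card _ (hfin x)]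
    exact_mod_cast hN x
  have hrow : ‖b v x‖ ≤ ∑ y ∈ F, c * ‖v y‖ := by
    rw [apply_eq_sum_closedBall hfin hb]
    refine (norm_sum_le _ _).trans (Finset.sum_le_sum fun y _ => ?_)
    rw [norm_mul]
    exact mul_le_mul_of_nonneg_right (hc x y) (norm_nonneg _)
  calc ‖b v x‖ ^ 2 ≤ (∑ y ∈ F, c * ‖v y‖) ^ 2 := by gcongr
    _ ≤ F.card * ∑ y ∈ F, (c * ‖v y‖) ^ 2 := sq_sum_le_card_mul_sum_sq
    _ ≤ N * ∑ y ∈ F, (c * ‖v y‖) ^ 2 := by gcongr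
    _ = N * c ^ 2 * ∑ y ∈ F, ‖v y‖ ^ 2 := by simp_rw [mul_pow, ← Finset.mul_sum, mul_assoc]

theorem norm_le_of_hasPropagationLE {b : l2 Z →L[ℂ] l2 Z} (hb : HasPropagationLE b R) {c : ℝ}
    (hc0 : 0 ≤ c) (hc : ∀ x y, ‖entry b x y‖ ≤ c) {N : ℕ}
    (hN : ∀ z : Z, (closedBall z R).ncard ≤ N) : ‖b‖ ≤ N * c := by
  refine b.opNorm_le_bound (by positivity) fun v => ?_
  have hsymm : ∀ x y, y ∈ (hfin x).toFinset → x ∈ (hfin y).toFinset := by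
    simp [mem_closedBall, dist_comm]
  have hcard : ∀ x, (hfin x).toFinset.card ≤ N := fun x => by
    rw [← Set.ncard_eq_toFinset_card _ (hfin x)]
    exact hN x
  have key : ‖b v‖ₑ ^ 2 ≤ ENNReal.ofReal ((N * c * ‖v‖) ^ 2) :=
    calc ‖b v‖ₑ ^ 2 = ∑' x, ‖b v x‖ₑ ^ 2 := enorm_sq_eq_tsum _
      _ ≤ ∑' x, ENNReal.ofReal (N * c ^ 2) * ∑ y ∈ (hfin x).toFinset, ‖v y‖ₑ ^ 2 := by
        gcongr with x
        have h := ENNReal.ofReal_le_ofReal (norm_apply_sq_le_sum_closedBall hfin hb hc hN v x)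
        rw [ENNReal.ofReal_mul (by positivity),
          ENNReal.ofReal_sum_of_nonneg fun _ _ => by positivity] at h
        simpa only [ENNReal.ofReal_pow (norm_nonneg _), ofReal_norm] using h
      _ = ENNReal.ofReal (N * c ^ 2) * ∑' x, ∑ y ∈ (hfin x).toFinset, ‖v y‖ₑ ^ 2 :=
        ENNReal.tsum_mul_left
      _ ≤ ENNReal.ofReal (N * c ^ 2) * (N * ‖v‖ₑ ^ 2) := by
        rw [enorm_sq_eq_tsum v]
        gcongr
        exact tsum_sum_le_mul_tsum_of_symm _ hsymm hcard _
      _ = ENNReal.ofReal ((N * c * ‖v‖) ^ 2) := by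
        rw [show (N * c * ‖v‖) ^ 2 = N * c ^ 2 * (N * ‖v‖ ^ 2) by ring,
          ENNReal.ofReal_mul (p := N * c ^ 2) (by positivity),
          ENNReal.ofReal_mul (q := ‖v‖ ^ 2) (Nat.cast_nonneg N), ENNReal.ofReal_natCast,
          ENNReal.ofReal_pow (norm_nonneg _), ofReal_norm]
  rw [← ofReal_norm, ← ENNReal.ofReal_pow (norm_nonneg _),
    ENNReal.ofReal_le_ofReal_iff (by positivity)] at key
  exact (pow_le_pow_iff_left₀ (norm_nonneg _) (by positivity) two_ne_zero).1 key

end propagation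

/-- For a Schur multiplier `k` (with multiplication operator `M = m_k`)
and an operator `a` of propagation at most `R` on a uniformly locally finite space,
`‖m_k(a) - a‖ ≤ N_R · ‖a‖ · sup {|k(x,y) - 1| : d(x,y) ≤ R}`, where `N_R` is any bound
on the cardinality of the closed balls of radius `R`. -/
theorem schur_multiplier_estimate_on_finite_propagation
    (Z : Type*) [MetricSpace Z] (hZ : UniformlyLocallyFinite Z)
    (R : ℝ) (hR : 0 < R) (k : Z → Z → ℂ)
    (M : (l2 Z →L[ℂ] l2 Z) →L[ℂ] l2 Z →L[ℂ] l2 Z)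
    (hM : ∀ (a : l2 Z →L[ℂ] l2 Z) (x y : Z), entry (M a) x y = k x y * entry a x y)
    (a : l2 Z →L[ℂ] l2 Z) (ha : HasPropagationLE a R)
    (N : ℕ) (hN : ∀ z : Z, (Metric.closedBall z R).ncard ≤ N) :
    ‖M a - a‖ ≤ (N : ℝ) * ‖a‖ *
      sSup {r : ℝ | ∃ x y : Z, dist x y ≤ R ∧ r = ‖k x y - 1‖} := by
  set T := {r : ℝ | ∃ x y : Z, dist x y ≤ R ∧ r = ‖k x y - 1‖}
  have hbdd : BddAbove T := by
    refine ⟨‖M‖ + 1, ?_⟩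
    rintro _ ⟨x, y, -, rfl⟩
    exact (norm_sub_le _ _).trans (by simpa using norm_le_opNorm_of_entry_eq_mul k M hM x y)
  have hs : 0 ≤ sSup T := Real.sSup_nonneg fun _ ⟨_, _, _, hr⟩ => hr ▸ norm_nonneg _
  have hentry : ∀ x y, entry (M a - a) x y = (k x y - 1) * entry a x y := fun x y => by
    rw [entry_sub, hM, sub_mul, one_mul]
  have hprop : HasPropagationLE (M a - a) R := fun x y h => by
    rw [hentry, ha x y h, mul_zero]
  have hbound : ∀ x y, ‖entry (M a - a) x y‖ ≤ ‖a‖ * sSup T := fun x y => by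
    rcases le_or_gt (dist x y) R with h | h
    · rw [hentry, norm_mul, mul_comm]
      exact mul_le_mul (norm_entry_le a x y) (le_csSup hbdd ⟨x, y, h, rfl⟩)
        (norm_nonneg _) (norm_nonneg _)
    · rw [hprop x y h, norm_zero]
      positivity
  obtain ⟨_, hfin⟩ := hZ R hR
  rw [mul_assoc]
  exact norm_le_of_hasPropagationLE (fun z => (hfin z).1) hprop (by positivity) hbound hN
end
end

section
/- In the setup below: (i) if f is a compactly supported continuous function from G to C_b(G) with supp f ⊆ B(e,s) for some s > 0, then ⟨A_f φ_w, φ_z⟩_{L²(G,μ)} = 0 for all z,w ∈ Z with d(z,w) > s + δ/2; in particular the operator W* A_f W on ℓ²(Z) has propagation at most s + δ/2. (ii) Consequently, for every operator a in the operator-norm closure of {A_f : f ∈ C_c(G, C_b(G))} in B(L²(G,μ)), the operator W* a W belongs to the uniform Roe algebra C*_u(Z). -/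
open MeasureTheory Metric Bornology Filter Topology
open scoped ENNReal BoundedContinuousFunction

noncomputable section

/-- `d` is a proper left-invariant metric on the topological group `G` that induces
(is compatible with) its topology. -/
structure IsProperLeftInvariantCompatibleMetric (G : Type*) [Group G] [TopologicalSpace G]
    (d : G → G → ℝ) : Prop where
  refl : ∀ x, d x x = 0
  eq_of : ∀ {x y}, d x y = 0 → x = y
  symm : ∀ x y, d x y = d y x
  triangle : ∀ x y z, d x z ≤ d x y + d y z
  left_invariant : ∀ g x y, d (g * x) (g * y) = d x y
  compatible : ∀ s : Set G, IsOpen s ↔ ∀ x ∈ s, ∃ ε > 0, ∀ y, d x y < ε → y ∈ s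
  proper : ∀ (x : G) (r : ℝ), IsCompact {y : G | d x y ≤ r}

/-- The uniform Roe algebra of the subset `Z ⊆ G` with respect to the metric `d`:
the operator-norm closure of the finite propagation operators on `ℓ²(Z)`. -/
def subsetRoe {G : Type*} (d : G → G → ℝ) (Z : Set G) : Set (l2 Z →L[ℂ] l2 Z) :=
  closure {T | ∃ R : ℝ, ∀ z w : Z, R < d z w → entry T z w = 0}

/-! Since `φ` vanishes off `B(e, δ/4)`, the vector `W δ_z` vanishes off `B(z, δ/4)`. If `f` is
supported in `B(e, s)`, then `A_f ξ` vanishes off the `s`-neighbourhood of the support of `ξ`: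
left translation preserves `μ` and `d(x, xy) = d(e, y)`. So `W δ_z` and `A_f W δ_w` have
disjoint supports as soon as `d(z, w) > s + δ/2`. For (ii), `a ↦ W* a W` is continuous, and every
compactly supported `f` is supported in some ball because compact sets are bounded. -/

theorem MeasureTheory.L2.inner_eq_zero_of_ae_eq_zero_or {α 𝕜 E : Type*} [MeasurableSpace α]
    {μ : Measure α} [RCLike 𝕜] [NormedAddCommGroup E] [InnerProductSpace 𝕜 E] {f g : Lp E 2 μ}
    (h : ∀ᵐ x ∂μ, f x = 0 ∨ g x = 0) : inner 𝕜 f g = 0 := by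
  rw [L2.inner_def]
  refine integral_eq_zero_of_ae ?_
  filter_upwards [h] with x hx
  rcases hx with hf | hg
  · simp [hf]
  · simp [hg]

section Roe

variable {X E : Type*} [NormedAddCommGroup E] [InnerProductSpace ℂ E] [CompleteSpace E]

theorem entry_adjoint_comp_comp (W : l2 X →L[ℂ] E) (A : E →L[ℂ] E) (x y : X) :
    entry (((ContinuousLinearMap.adjoint W).comp A).comp W) x y =
      inner ℂ (W (delta x)) (A (W (delta y))) :=
  ContinuousLinearMap.adjoint_inner_right W _ _

theorem adjoint_comp_comp_mem_subsetRoe {d : X → X → ℝ} {Z : Set X} (W : l2 Z →L[ℂ] E)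
    {S : Set (E →L[ℂ] E)}
    (hS : ∀ A ∈ S, ∃ R : ℝ, ∀ z w : Z, R < d z w → inner ℂ (W (delta z)) (A (W (delta w))) = 0)
    {a : E →L[ℂ] E} (ha : a ∈ closure S) :
    ((ContinuousLinearMap.adjoint W).comp a).comp W ∈ subsetRoe d Z := by
  refine map_mem_closure (f := fun A => ((ContinuousLinearMap.adjoint W).comp A).comp W)
    ((continuous_const.clm_comp continuous_id).clm_comp continuous_const) ha
    fun A hA => ?_
  obtain ⟨R, hR⟩ := hS A hA
  exact ⟨R, fun z w hzw => (entry_adjoint_comp_comp W A z w).trans (hR z w hzw)⟩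

end Roe

namespace IsProperLeftInvariantCompatibleMetric

variable {G : Type*} [Group G] [TopologicalSpace G] {d : G → G → ℝ}

theorem dist_one_inv_mul (hd : IsProperLeftInvariantCompatibleMetric G d) (z x : G) :
    d 1 (z⁻¹ * x) = d z x := by
  simpa using hd.left_invariant z⁻¹ z x

theorem isOpen_setOf_dist_lt (hd : IsProperLeftInvariantCompatibleMetric G d) (c : G) (r : ℝ) :
    IsOpen {y : G | d c y < r} := by
  rw [hd.compatible]
  intro x (hx : d c x < r)
  refine ⟨r - d c x, by linarith, fun y hy => ?_⟩
  have := hd.triangle c x y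
  show d c y < r
  linarith

theorem exists_forall_eq_zero_of_hasCompactSupport
    (hd : IsProperLeftInvariantCompatibleMetric G d) {M : Type*} [Zero M] {f : G → M}
    (hf : HasCompactSupport f) (c : G) : ∃ s : ℝ, ∀ y, s < d c y → f y = 0 := by
  obtain ⟨n, hn⟩ := hf.elim_directed_cover (fun n : ℕ => {y : G | d c y < n})
    (fun n => hd.isOpen_setOf_dist_lt c n)
    (fun y _ => Set.mem_iUnion.mpr (exists_nat_gt (d c y)))
    (Monotone.directed_le fun m n hmn y (hy : d c y < m) =>
      show d c y < n from hy.trans_le (Nat.cast_le.mpr hmn))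
  refine ⟨n, fun y hy => ?_⟩
  by_contra hfy
  exact lt_asymm hy (hn (subset_tsupport f hfy))

variable [MeasurableSpace G] {μ : Measure G}

theorem ae_eq_zero_of_ae_eq_translate (hd : IsProperLeftInvariantCompatibleMetric G d)
    {η ψ : G → ℂ} {z : G} {r : ℝ} (hη : ∀ᵐ x ∂μ, η x = ψ (z⁻¹ * x))
    (hψ : ∀ g, r < d 1 g → ψ g = 0) : ∀ᵐ x ∂μ, r < d z x → η x = 0 := by
  filter_upwards [hη] with x hx hzx
  rw [hx, hψ _ (by rwa [hd.dist_one_inv_mul])]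

theorem integral_eq_zero_of_lt_dist [MeasurableMul G] [μ.IsMulLeftInvariant]
    (hd : IsProperLeftInvariantCompatibleMetric G d) {ξ : G → ℂ} {w : G} {r : ℝ}
    (hξ : ∀ᵐ x ∂μ, r < d w x → ξ x = 0) {k : G → ℂ} {s : ℝ} (hk : ∀ y, s < d 1 y → k y = 0)
    (c : G → ℂ) {x : G} (hx : r + s < d w x) :
    ∫ y, k y * ξ (x * y) * c y ∂μ = 0 := by
  refine integral_eq_zero_of_ae ?_
  filter_upwards [(measurePreserving_mul_left μ x).quasiMeasurePreserving.ae hξ] with y hy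
  by_cases hys : s < d 1 y
  · simp [hk y hys]
  · have h1y : d x (x * y) = d 1 y := by simpa using hd.left_invariant x 1 y
    have := hd.triangle w x (x * y)
    have := hd.triangle w (x * y) x
    have := hd.symm x (x * y)
    simp [hy (by linarith)]

theorem inner_eq_zero_of_lt_dist [MeasurableMul G] [μ.IsMulLeftInvariant]
    (hd : IsProperLeftInvariantCompatibleMetric G d) {η ξ ζ : Lp ℂ 2 μ} {z w : G}
    {r r' s : ℝ} (hη : ∀ᵐ x ∂μ, r < d z x → η x = 0) (hξ : ∀ᵐ x ∂μ, r' < d w x → ξ x = 0)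
    {k : G → G → ℂ} (hk : ∀ y, s < d 1 y → ∀ x, k y x = 0) (c : G → ℂ)
    (hζ : ∀ᵐ x ∂μ, ζ x = ∫ y, k y x * ξ (x * y) * c y ∂μ) (hzw : r + s + r' < d z w) :
    inner ℂ η ζ = 0 := by
  refine L2.inner_eq_zero_of_ae_eq_zero_or ?_
  filter_upwards [hη, hζ] with x hηx hζx
  by_cases hzx : r < d z x
  · exact .inl (hηx hzx)
  · have := hd.triangle z x w
    have := hd.symm x w
    refine .inr (hζx.trans (hd.integral_eq_zero_of_lt_dist hξ (fun y hy => hk y hy x) c ?_))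
    linarith

end IsProperLeftInvariantCompatibleMetric

theorem WstarAW_in_uniform_roe_general
    (G : Type*) [Group G] [TopologicalSpace G] [IsTopologicalGroup G]
    [MeasurableSpace G] [BorelSpace G]
    (μ : Measure G) [μ.IsHaarMeasure]
    (Δ : G → ℝ)
    (d : G → G → ℝ) (hd : IsProperLeftInvariantCompatibleMetric G d)
    (Z : Set G)
    (δ : ℝ)
    (φ : G → ℝ)
    (hφsupp : ∀ g : G, δ / 4 < d 1 g → φ g = 0)
    (W : l2 Z →L[ℂ] Lp ℂ 2 μ)
    (hW : ∀ z : Z, ∀ᵐ x ∂μ, (W (delta z) : G → ℂ) x = ((φ ((z : G)⁻¹ * x) : ℝ) : ℂ)) :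
    (∀ s > (0:ℝ), ∀ f : G → (G →ᵇ ℂ), Continuous f → HasCompactSupport f →
      (∀ y : G, s < d 1 y → f y = 0) →
      ∀ A : Lp ℂ 2 μ →L[ℂ] Lp ℂ 2 μ,
        (∀ ξ : Lp ℂ 2 μ, ∀ᵐ x ∂μ, (A ξ : G → ℂ) x =
          ∫ y, f y x * (ξ : G → ℂ) (x * y) * (((Δ y ^ ((1:ℝ)/2) : ℝ)) : ℂ) ∂μ) →
        ∀ z w : Z, s + δ / 2 < d z w →
          (inner ℂ (W (delta z)) (A (W (delta w))) : ℂ) = 0 ∧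
          entry (((ContinuousLinearMap.adjoint W).comp A).comp W) z w = 0) ∧
    (∀ a : Lp ℂ 2 μ →L[ℂ] Lp ℂ 2 μ,
      a ∈ closure {A : Lp ℂ 2 μ →L[ℂ] Lp ℂ 2 μ |
        ∃ f : G → (G →ᵇ ℂ), Continuous f ∧ HasCompactSupport f ∧
          ∀ ξ : Lp ℂ 2 μ, ∀ᵐ x ∂μ, (A ξ : G → ℂ) x =
            ∫ y, f y x * (ξ : G → ℂ) (x * y) * (((Δ y ^ ((1:ℝ)/2) : ℝ)) : ℂ) ∂μ} →
      ((ContinuousLinearMap.adjoint W).comp a).comp W ∈ subsetRoe d Z) := by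
  have hWloc : ∀ z : Z, ∀ᵐ x ∂μ, δ / 4 < d z x → (W (delta z) : G → ℂ) x = 0 := fun z =>
    hd.ae_eq_zero_of_ae_eq_translate (ψ := fun g => ((φ g : ℝ) : ℂ)) (hW z)
      fun g hg => by simp [hφsupp g hg]
  have hlocal : ∀ (s : ℝ) (f : G → (G →ᵇ ℂ)), (∀ y : G, s < d 1 y → f y = 0) →
      ∀ A : Lp ℂ 2 μ →L[ℂ] Lp ℂ 2 μ, (∀ ξ : Lp ℂ 2 μ, ∀ᵐ x ∂μ, (A ξ : G → ℂ) x =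
          ∫ y, f y x * (ξ : G → ℂ) (x * y) * (((Δ y ^ ((1:ℝ)/2) : ℝ)) : ℂ) ∂μ) →
      ∀ z w : Z, s + δ / 2 < d z w → inner ℂ (W (delta z)) (A (W (delta w))) = 0 :=
    fun s f hf A hA z w hzw => hd.inner_eq_zero_of_lt_dist (hWloc z) (hWloc w)
      (s := s) (fun y hy x => by simp [hf y hy]) _ (hA _) (by linarith)
  refine ⟨fun s _ f _ _ hf A hA z w hzw => ?_, fun a ha => ?_⟩
  · have hzero := hlocal s f hf A hA z w hzw
    exact ⟨hzero, (entry_adjoint_comp_comp W A z w).trans hzero⟩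
  · refine adjoint_comp_comp_mem_subsetRoe W ?_ ha
    rintro A ⟨f, -, hfK, hA⟩
    obtain ⟨s, hs⟩ := hd.exists_forall_eq_zero_of_hasCompactSupport hfK 1
    exact ⟨s + δ / 2, hlocal s f hs A hA⟩

/-- (i) For `f ∈ C_c(G, C_b(G))` supported in `B(e,s)`, the operator
`W* A_f W` has propagation at most `s + δ/2`; (ii) hence `W* a W ∈ C*_u(Z)` for every
`a` in the closure of the `A_f`. -/
theorem WstarAW_in_uniform_roe
    (G : Type*) [Group G] [TopologicalSpace G] [IsTopologicalGroup G]
    [LocallyCompactSpace G] [SecondCountableTopology G] [T2Space G]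
    [MeasurableSpace G] [BorelSpace G]
    (μ : Measure G) [μ.IsHaarMeasure]
    (Δ : G → ℝ) (hΔpos : ∀ y : G, 0 < Δ y)
    (hΔ : ∀ y : G, Measure.map (fun x => x * y) μ = ENNReal.ofReal (Δ y)⁻¹ • μ)
    (d : G → G → ℝ) (hd : IsProperLeftInvariantCompatibleMetric G d)
    (Z : Set G)
    (hZulf : ∀ S > (0:ℝ), ∃ N : ℕ, ∀ z ∈ Z,
      {x ∈ Z | d z x ≤ S}.Finite ∧ {x ∈ Z | d z x ≤ S}.ncard ≤ N)
    (δ : ℝ) (hδpos : 0 < δ)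
    (hsep : ∀ z ∈ Z, ∀ w ∈ Z, z ≠ w → δ ≤ d z w)
    (hlat : ∃ R > (0:ℝ), ∀ x : G, ∃ z ∈ Z, d z x ≤ R)
    (φ : G → ℝ) (hφcont : Continuous φ) (hφnn : ∀ g : G, 0 ≤ φ g)
    (hφsupp : ∀ g : G, δ / 4 < d 1 g → φ g = 0)
    (hφnorm : ∫ g, φ g ^ 2 ∂μ = 1)
    (W : l2 Z →L[ℂ] Lp ℂ 2 μ) (hWiso : ∀ v : l2 Z, ‖W v‖ = ‖v‖)
    (hW : ∀ z : Z, ∀ᵐ x ∂μ, (W (delta z) : G → ℂ) x = ((φ ((z : G)⁻¹ * x) : ℝ) : ℂ)) :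
    (∀ s > (0:ℝ), ∀ f : G → (G →ᵇ ℂ), Continuous f → HasCompactSupport f →
      (∀ y : G, s < d 1 y → f y = 0) →
      ∀ A : Lp ℂ 2 μ →L[ℂ] Lp ℂ 2 μ,
        (∀ ξ : Lp ℂ 2 μ, ∀ᵐ x ∂μ, (A ξ : G → ℂ) x =
          ∫ y, f y x * (ξ : G → ℂ) (x * y) * (((Δ y ^ ((1:ℝ)/2) : ℝ)) : ℂ) ∂μ) →
        ∀ z w : Z, s + δ / 2 < d z w →
          (inner ℂ (W (delta z)) (A (W (delta w))) : ℂ) = 0 ∧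
          entry (((ContinuousLinearMap.adjoint W).comp A).comp W) z w = 0) ∧
    (∀ a : Lp ℂ 2 μ →L[ℂ] Lp ℂ 2 μ,
      a ∈ closure {A : Lp ℂ 2 μ →L[ℂ] Lp ℂ 2 μ |
        ∃ f : G → (G →ᵇ ℂ), Continuous f ∧ HasCompactSupport f ∧
          ∀ ξ : Lp ℂ 2 μ, ∀ᵐ x ∂μ, (A ξ : G → ℂ) x =
            ∫ y, f y x * (ξ : G → ℂ) (x * y) * (((Δ y ^ ((1:ℝ)/2) : ℝ)) : ℂ) ∂μ} →
      ((ContinuousLinearMap.adjoint W).comp a).comp W ∈ subsetRoe d Z) :=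
  WstarAW_in_uniform_roe_general G μ Δ d hd Z δ φ hφsupp W hW
end
end
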